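/- For every α > 0, there exists a class of probability distributions over ℕ×ℕ that is realizably learnable but, for every η with 0 < η ≤ 1/(16α), is not η-subtractive α-robustly learnable. -/

import Mathlib

open scoped BigOperators ENNReal

namespace RobustDistLearn

variable {X : Type*}

/-- `p` is a probability mass function on `X`. -/
def IsPMF (p : X → ℝ) : Prop := (∀ x, 0 ≤ p x) ∧ ∑' x, p x = 1

/-- Total variation distance between two mass functions:
`d_TV(p,q) = (1/2)·∑ₓ |p x − q x|`. -/
noncomputable def dTV (p q : X → ℝ) : ℝ := (1 / 2) * ∑' x, |p x - q x|

/-- The probability, over a sample `S` of `n` i.i.d. draws from `p`, of the event `E`. -/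
noncomputable def iidProb (p : X → ℝ) (n : ℕ) (E : Set (Fin n → X)) : ℝ :=
  ∑' S : Fin n → X, E.indicator (fun T => ∏ i, p (T i)) S

/-- The mixture `η·q + (1−η)·p`. -/
def mix (η : ℝ) (q p : X → ℝ) : X → ℝ := fun x => η * q x + (1 - η) * p x

/-- `inf_{p' ∈ C} d_TV(p, p')`. -/
noncomputable def distToClass (p : X → ℝ) (C : Set (X → ℝ)) : ℝ := sInf (dTV p '' C)

/-- A learner maps, for each sample size `n`, a tuple `S ∈ Xⁿ` to a distribution over `X`. -/
def IsLearner (A : (n : ℕ) → (Fin n → X) → (X → ℝ)) : Prop := ∀ n S, IsPMF (A n S)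

/-- Realizable learnability of a class `C` of distributions. -/
def RealizablyLearnable (C : Set (X → ℝ)) : Prop :=
  ∃ A : (n : ℕ) → (Fin n → X) → (X → ℝ), IsLearner A ∧
    ∃ nC : ℝ → ℝ → ℕ,
      ∀ p ∈ C, ∀ ε ∈ Set.Ioo (0:ℝ) 1, ∀ δ ∈ Set.Ioo (0:ℝ) 1, ∀ n : ℕ, nC ε δ ≤ n →
        1 - δ ≤ iidProb p n {S | dTV (A n S) p ≤ ε}

/-- `α`-robust (agnostic) learnability. -/
def RobustlyLearnable (C : Set (X → ℝ)) (α : ℝ) : Prop :=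
  ∃ A : (n : ℕ) → (Fin n → X) → (X → ℝ), IsLearner A ∧
    ∃ nC : ℝ → ℝ → ℕ,
      ∀ p : X → ℝ, IsPMF p → ∀ ε ∈ Set.Ioo (0:ℝ) 1, ∀ δ ∈ Set.Ioo (0:ℝ) 1, ∀ n : ℕ, nC ε δ ≤ n →
        1 - δ ≤ iidProb p n {S | dTV (A n S) p ≤ α * distToClass p C + ε}

/-- Additive `α`-robust learnability. -/
def AdditiveRobustlyLearnable (C : Set (X → ℝ)) (α : ℝ) : Prop :=
  ∃ A : (n : ℕ) → (Fin n → X) → (X → ℝ), IsLearner A ∧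
    ∃ nC : ℝ → ℝ → ℕ,
      ∀ η ∈ Set.Ioo (0:ℝ) 1, ∀ q : X → ℝ, IsPMF q → ∀ p ∈ C,
        ∀ ε ∈ Set.Ioo (0:ℝ) 1, ∀ δ ∈ Set.Ioo (0:ℝ) 1, ∀ n : ℕ, nC ε δ ≤ n →
          1 - δ ≤ iidProb (mix η q p) n {S | dTV (A n S) (mix η q p) ≤ α * η + ε}

/-- Huber additive `α`-robust learnability: the guarantee is with respect to the clean `p`. -/
def HuberAdditiveRobustlyLearnable (C : Set (X → ℝ)) (α : ℝ) : Prop :=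
  ∃ A : (n : ℕ) → (Fin n → X) → (X → ℝ), IsLearner A ∧
    ∃ nC : ℝ → ℝ → ℕ,
      ∀ η ∈ Set.Ioo (0:ℝ) 1, ∀ q : X → ℝ, IsPMF q → ∀ p ∈ C,
        ∀ ε ∈ Set.Ioo (0:ℝ) 1, ∀ δ ∈ Set.Ioo (0:ℝ) 1, ∀ n : ℕ, nC ε δ ≤ n →
          1 - δ ≤ iidProb (mix η q p) n {S | dTV (A n S) p ≤ α * η + ε}

/-- Subtractive `α`-robust learnability. -/
def SubtractiveRobustlyLearnable (C : Set (X → ℝ)) (α : ℝ) : Prop :=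
  ∃ A : (n : ℕ) → (Fin n → X) → (X → ℝ), IsLearner A ∧
    ∃ nC : ℝ → ℝ → ℕ,
      ∀ η ∈ Set.Ioo (0:ℝ) 1, ∀ p : X → ℝ, IsPMF p →
        (∃ q : X → ℝ, IsPMF q ∧ mix η q p ∈ C) →
        ∀ ε ∈ Set.Ioo (0:ℝ) 1, ∀ δ ∈ Set.Ioo (0:ℝ) 1, ∀ n : ℕ, nC ε δ ≤ n →
          1 - δ ≤ iidProb p n {S | dTV (A n S) p ≤ α * η + ε}

/-- `η`-`α`-robust learnability (known corruption level `η`). -/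
def EtaRobustlyLearnable (C : Set (X → ℝ)) (η α : ℝ) : Prop :=
  ∃ A : (n : ℕ) → (Fin n → X) → (X → ℝ), IsLearner A ∧
    ∃ nC : ℝ → ℝ → ℕ,
      ∀ p : X → ℝ, IsPMF p → distToClass p C ≤ η →
        ∀ ε ∈ Set.Ioo (0:ℝ) 1, ∀ δ ∈ Set.Ioo (0:ℝ) 1, ∀ n : ℕ, nC ε δ ≤ n →
          1 - δ ≤ iidProb p n {S | dTV (A n S) p ≤ α * η + ε}

/-- `η`-additive `α`-robust learnability (known corruption level `η`). -/
def EtaAdditiveRobustlyLearnable (C : Set (X → ℝ)) (η α : ℝ) : Prop :=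
  ∃ A : (n : ℕ) → (Fin n → X) → (X → ℝ), IsLearner A ∧
    ∃ nC : ℝ → ℝ → ℕ,
      ∀ q : X → ℝ, IsPMF q → ∀ p ∈ C,
        ∀ ε ∈ Set.Ioo (0:ℝ) 1, ∀ δ ∈ Set.Ioo (0:ℝ) 1, ∀ n : ℕ, nC ε δ ≤ n →
          1 - δ ≤ iidProb (mix η q p) n {S | dTV (A n S) (mix η q p) ≤ α * η + ε}

/-- `η`-subtractive `α`-robust learnability (known corruption level `η`). -/
def EtaSubtractiveRobustlyLearnable (C : Set (X → ℝ)) (η α : ℝ) : Prop :=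
  ∃ A : (n : ℕ) → (Fin n → X) → (X → ℝ), IsLearner A ∧
    ∃ nC : ℝ → ℝ → ℕ,
      ∀ p : X → ℝ, IsPMF p →
        (∃ q : X → ℝ, IsPMF q ∧ mix η q p ∈ C) →
        ∀ ε ∈ Set.Ioo (0:ℝ) 1, ∀ δ ∈ Set.Ioo (0:ℝ) 1, ∀ n : ℕ, nC ε δ ≤ n →
          1 - δ ≤ iidProb p n {S | dTV (A n S) p ≤ α * η + ε}

/-- The probability of an event under a `PMF`. -/
noncomputable def pmfProb {Y : Type*} (m : PMF Y) (E : Set Y) : ℝ :=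
  (m.toOuterMeasure E).toReal

/-- `(ε,δ)`-differential privacy of a randomized algorithm on inputs of size `n`. -/
def IsDP {Y : Type*} {n : ℕ} (M : (Fin n → X) → PMF Y) (ε δ : ℝ) : Prop :=
  ∀ x x' : Fin n → X, (∃ i : Fin n, ∀ j : Fin n, j ≠ i → x j = x' j) →
    ∀ B : Set Y,
      (M x).toOuterMeasure B ≤
        ENNReal.ofReal (Real.exp ε) * (M x').toOuterMeasure B + ENNReal.ofReal δ

/-- Probability, jointly over `S ~ pⁿ` and the internal randomness of `M`, of the event `E`
on the output of `M`. -/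
noncomputable def randIidProb {Y : Type*} (p : X → ℝ) (n : ℕ)
    (M : (Fin n → X) → PMF Y) (E : Set Y) : ℝ :=
  ∑' S : Fin n → X, (∏ i, p (S i)) * pmfProb (M S) E

/-- Approximate DP learnability. -/
def ApproxDPLearnable (C : Set (X → ℝ)) : Prop :=
  ∃ Alg : (n : ℕ) → (Fin n → X) → PMF (X → ℝ),
    (∀ n S f, f ∈ (Alg n S).support → IsPMF f) ∧
    ∃ nC : ℝ → ℝ → ℝ → ℝ → ℕ,
      ∀ p ∈ C, ∀ α ∈ Set.Ioo (0:ℝ) 1, ∀ β ∈ Set.Ioo (0:ℝ) 1,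
        ∀ ε ∈ Set.Ioo (0:ℝ) 1, ∀ δ ∈ Set.Ioo (0:ℝ) 1, ∀ n : ℕ, nC α β ε δ ≤ n →
          IsDP (Alg n) ε δ ∧
          1 - β ≤ randIidProb p n (Alg n) {f | dTV p f ≤ α}

/-- Pure DP learnability. -/
def PureDPLearnable (C : Set (X → ℝ)) : Prop :=
  ∃ Alg : (n : ℕ) → (Fin n → X) → PMF (X → ℝ),
    (∀ n S f, f ∈ (Alg n S).support → IsPMF f) ∧
    ∃ nC : ℝ → ℝ → ℝ → ℕ,
      ∀ p ∈ C, ∀ α ∈ Set.Ioo (0:ℝ) 1, ∀ β ∈ Set.Ioo (0:ℝ) 1, ∀ ε ∈ Set.Ioo (0:ℝ) 1,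
        ∀ n : ℕ, nC α β ε ≤ n →
          IsDP (Alg n) ε 0 ∧
          1 - β ≤ randIidProb p n (Alg n) {f | dTV p f ≤ α}

/-- `α`-robust learnability by a possibly randomized learner. -/
def RandRobustlyLearnable (C : Set (X → ℝ)) (α : ℝ) : Prop :=
  ∃ Alg : (n : ℕ) → (Fin n → X) → PMF (X → ℝ),
    (∀ n S f, f ∈ (Alg n S).support → IsPMF f) ∧
    ∃ nC : ℝ → ℝ → ℕ,
      ∀ p : X → ℝ, IsPMF p → ∀ ε ∈ Set.Ioo (0:ℝ) 1, ∀ δ ∈ Set.Ioo (0:ℝ) 1,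
        ∀ n : ℕ, nC ε δ ≤ n →
          1 - δ ≤ randIidProb p n (Alg n) {f | dTV f p ≤ α * distToClass p C + ε}

/-- A class `C` admits `(τ, t, nf)` `r`-robust sample compression. -/
def AdmitsCompression (C : Set (X → ℝ)) (τ t nf : ℝ → ℕ) (r : ℝ) : Prop :=
  ∃ J : List X → List Bool → (X → ℝ),
    (∀ L B, J L B ∈ C) ∧
    ∀ q ∈ C, ∀ p : X → ℝ, IsPMF p → dTV p q ≤ r →
      ∀ ε ∈ Set.Ioo (0:ℝ) 1,
        (2 : ℝ) / 3 ≤ iidProb p (nf ε)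
          {S | ∃ L : List X, ∃ B : List Bool,
            L.length ≤ τ ε ∧ (∀ x ∈ L, ∃ i, S i = x) ∧ B.length ≤ t ε ∧
            dTV (J L B) q ≤ r + ε}

/-- The distribution `q_{i,j,k} = (1−1/j)·δ_{(0,0)} + (1/j − 1/k)·U_{A_i×{2j+1}} + (1/k)·δ_{(i,2j+2)}`
over `ℕ × ℕ`, for a given enumeration `A` of the finite nonempty subsets of `ℕ`. -/
noncomputable def qDist (A : ℕ → Finset ℕ) (i j k : ℕ) : ℕ × ℕ → ℝ := fun x =>
  (if x = (0, 0) then 1 - 1 / (j : ℝ) else 0) +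
  (if x.1 ∈ A i ∧ x.2 = 2 * j + 1 then (1 / (j : ℝ) - 1 / (k : ℝ)) / ((A i).card : ℝ) else 0) +
  (if x = (i, 2 * j + 2) then 1 / (k : ℝ) else 0)

/-- The class `Q_g = {q_{i,j,g(j)} : i, j ∈ ℕ, j ≥ 1}`. -/
def Qg (A : ℕ → Finset ℕ) (g : ℕ → ℕ) : Set (ℕ × ℕ → ℝ) :=
  {p | ∃ i j : ℕ, 1 ≤ j ∧ p = qDist A i j (g j)}

/-- The distribution `(1−γ)·δ_{(0,0)} + γ·U_{B×{2j+1}}` over `ℕ × ℕ`. -/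
noncomputable def pDist (γ : ℝ) (B : Finset ℕ) (j : ℕ) : ℕ × ℕ → ℝ := fun x =>
  (if x = (0, 0) then 1 - γ else 0) +
  (if x.1 ∈ B ∧ x.2 = 2 * j + 1 then γ / (B.card : ℝ) else 0)

/-- `g : ℕ → ℕ` is superlinear: `g(t)/t → ∞`. -/
def Superlinear (g : ℕ → ℕ) : Prop :=
  Filter.Tendsto (fun t : ℕ => (g t : ℝ) / (t : ℝ)) Filter.atTop Filter.atTop


/-!
The class consists of the distributions `(1 - γ)·δ₀ + γ·U_B` (`B` a finite set on row `1` of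
`ℕ × ℕ`), each with a `κγ` fraction of its mass moved to a *tag* point on row `2` that encodes
`(B, γ)`. A learner that sees the tag knows the distribution exactly, and the tag carries enough
mass relative to the distance `≈ γ` from `δ₀` that the class is realizably learnable. Deleting the
tag is an `η`-subtraction as soon as `κγ ≤ η`, and it leaves `(1 - γ)·δ₀ + γ·U_B`, which no
learner can approximate within `7γ/32` from a bounded number of samples: for `|B|` much larger
than the sample, averaging over a uniformly random `B` shows that any fixed hypothesis puts little
mass on most of the unseen part of `B`. Choosing `γ ≈ 7αη` and `κ ≈ 1/(8α)` gives the theorem.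
-/

open scoped Finset

section Basic

variable {X : Type*}

theorem IsPMF.summable {p : X → ℝ} (hp : IsPMF p) : Summable p := by
  by_contra h
  simpa [tsum_eq_zero_of_not_summable h] using hp.2

theorem IsPMF.sum_eq_one {p : X → ℝ} (hp : IsPMF p) {s : Finset X} (hs : ∀ x ∉ s, p x = 0) :
    ∑ x ∈ s, p x = 1 := by
  rw [← hp.2]
  exact (tsum_eq_sum hs).symm

theorem IsPMF.le_one {p : X → ℝ} (hp : IsPMF p) (a : X) : p a ≤ 1 := by
  simpa [hp.2] using hp.summable.le_tsum a fun x _ => hp.1 x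

theorem isPMF_mix {p q : X → ℝ} (hq : IsPMF q) (hp : IsPMF p) {t : ℝ} (ht₀ : 0 ≤ t)
    (ht₁ : t ≤ 1) : IsPMF (mix t q p) := by
  refine ⟨fun x => add_nonneg (mul_nonneg ht₀ (hq.1 x)) (mul_nonneg (by linarith) (hp.1 x)), ?_⟩
  simp only [mix]
  rw [(hq.summable.mul_left t).tsum_add (hp.summable.mul_left _), tsum_mul_left, tsum_mul_left,
    hq.2, hp.2]
  ring

theorem mix_mix_div_self (q p : X → ℝ) {η : ℝ} (hη : η ≠ 0) (θ : ℝ) :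
    mix η (mix (θ / η) q p) p = mix θ q p := by
  funext x
  simp only [mix]
  field_simp
  ring

theorem sum_abs_sub_le_two_mul_dTV {p q : X → ℝ} (hp : Summable p) (hq : Summable q)
    (s : Finset X) : ∑ x ∈ s, |p x - q x| ≤ 2 * dTV p q := by
  have := (summable_abs_iff.mpr (hp.sub hq)).sum_le_tsum s fun x _ => abs_nonneg _
  unfold dTV
  linarith

theorem IsPMF.mul_card_filter_le_le_one {f : X → ℝ} (hf : IsPMF f) (τ : ℝ) (s : Finset X) :
    τ * #{x ∈ s | τ ≤ f x} ≤ 1 :=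
  calc τ * #{x ∈ s | τ ≤ f x} = ∑ x ∈ s with τ ≤ f x, τ := by
        rw [Finset.sum_const, nsmul_eq_mul, mul_comm]
    _ ≤ ∑ x ∈ s with τ ≤ f x, f x := Finset.sum_le_sum fun x hx => (Finset.mem_filter.mp hx).2
    _ ≤ 1 := hf.2 ▸ hf.summable.sum_le_tsum _ fun x _ => hf.1 x

variable [DecidableEq X]

def dirac (a : X) : X → ℝ := fun x => if x = a then 1 else 0

noncomputable def unif (B : Finset X) : X → ℝ := fun x => if x ∈ B then (#B : ℝ)⁻¹ else 0

theorem isPMF_dirac (a : X) : IsPMF (dirac a) :=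
  ⟨fun x => by unfold dirac; split_ifs <;> norm_num, tsum_ite_eq a 1⟩

theorem isPMF_unif {B : Finset X} (hB : B.Nonempty) : IsPMF (unif B) := by
  refine ⟨fun x => by unfold unif; split_ifs <;> positivity, ?_⟩
  rw [tsum_eq_sum (s := B) fun x hx => by simp [unif, hx]]
  simp [unif, hB.card_pos.ne']

theorem dTV_dirac {c : X → ℝ} (hc : IsPMF c) (a : X) : dTV (dirac a) c = 1 - c a := by
  have key : (fun x => |dirac a x - c x|) = fun x => c x + dirac a x * (1 - 2 * c a) := by
    funext x
    by_cases hx : x = a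
    · subst hx; simp [dirac, abs_of_nonneg (sub_nonneg.2 (hc.le_one x))]; ring
    · simp [dirac, hx, abs_of_nonneg (hc.1 x)]
  unfold dTV
  rw [key, hc.summable.tsum_add ((isPMF_dirac a).summable.mul_right _), tsum_mul_right,
    hc.2, (isPMF_dirac a).2]
  ring

end Basic

section Sampling

variable {X : Type*} {p : X → ℝ} {s : Finset X}

theorem iidProb_eq_sum (hs : ∀ x ∉ s, p x = 0) (n : ℕ) (E : Set (Fin n → X)) :
    iidProb p n E =
      ∑ S ∈ Fintype.piFinset fun _ => s, E.indicator (fun T => ∏ i, p (T i)) S := by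
  refine tsum_eq_sum fun S hS => ?_
  obtain ⟨i, hi⟩ : ∃ i, S i ∉ s := by simpa [Fintype.mem_piFinset] using hS
  simp [Finset.prod_eq_zero (f := fun i => p (S i)) (Finset.mem_univ i) (hs _ hi)]

theorem sum_piFinset_prod (s : Finset X) (n : ℕ) (f : X → ℝ) :
    ∑ S ∈ Fintype.piFinset (fun _ : Fin n => s), ∏ i, f (S i) = (∑ x ∈ s, f x) ^ n := by
  rw [← Finset.prod_univ_sum]
  simp

theorem iidProb_add_iidProb_compl (hp : IsPMF p) (hs : ∀ x ∉ s, p x = 0) (n : ℕ)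
    (E : Set (Fin n → X)) : iidProb p n E + iidProb p n Eᶜ = 1 := by
  rw [iidProb_eq_sum hs, iidProb_eq_sum hs, ← Finset.sum_add_distrib]
  simp only [Set.indicator_self_add_compl_apply]
  rw [sum_piFinset_prod, hp.sum_eq_one hs, one_pow]

theorem iidProb_mono (hp : ∀ x, 0 ≤ p x) (hs : ∀ x ∉ s, p x = 0) {n : ℕ}
    {E E' : Set (Fin n → X)} (h : ∀ S, (∀ i, p (S i) ≠ 0) → S ∈ E → S ∈ E') :
    iidProb p n E ≤ iidProb p n E' := by
  rw [iidProb_eq_sum hs, iidProb_eq_sum hs]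
  refine Finset.sum_le_sum fun S _ => ?_
  by_cases hS : S ∈ E
  · by_cases hpos : ∀ i, p (S i) ≠ 0
    · simp [Set.indicator_of_mem hS, Set.indicator_of_mem (h S hpos hS)]
    · obtain ⟨i, hi⟩ : ∃ i, p (S i) = 0 := by simpa using hpos
      rw [Set.indicator_of_mem hS, Finset.prod_eq_zero (Finset.mem_univ i) hi]
      exact Set.indicator_nonneg (fun _ _ => Finset.prod_nonneg fun i _ => hp _) S
  · rw [Set.indicator_of_notMem hS]
    exact Set.indicator_nonneg (fun _ _ => Finset.prod_nonneg fun i _ => hp _) S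

theorem iidProb_forall_ne (hp : IsPMF p) (hs : ∀ x ∉ s, p x = 0) (n : ℕ) (a : X) :
    iidProb p n {S | ∀ i, S i ≠ a} = (1 - p a) ^ n := by
  classical
  have hind : ∀ S : Fin n → X, {S | ∀ i, S i ≠ a}.indicator (fun T => ∏ i, p (T i)) S =
      ∏ i, (if S i = a then 0 else p (S i)) := by
    intro S
    by_cases hS : ∀ i, S i ≠ a
    · simp [hS]
    · obtain ⟨i, hi⟩ : ∃ i, S i = a := by simpa using hS
      rw [Set.indicator_of_notMem (by simpa using ⟨i, hi⟩),
        Finset.prod_eq_zero (f := fun i => if S i = a then 0 else p (S i)) (Finset.mem_univ i)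
          (if_pos hi)]
  have hsum : ∑ x ∈ s, (if x = a then 0 else p x) = 1 - p a := by
    have hsplit : ∀ x, (if x = a then 0 else p x) = p x - if x = a then p x else 0 := by
      intro x; split_ifs <;> ring
    rw [Finset.sum_congr rfl fun x _ => hsplit x, Finset.sum_sub_distrib, hp.sum_eq_one hs,
      Finset.sum_ite_eq']
    split_ifs with ha
    · rfl
    · rw [hs a ha]
  rw [iidProb_eq_sum hs, Finset.sum_congr rfl fun S _ => hind S,
    sum_piFinset_prod s n fun x => if x = a then 0 else p x, hsum]

end Sampling

theorem one_sub_pow_le {θ δ : ℝ} (n : ℕ) (hθ : θ ≤ 1) (hδ : 0 < δ)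
    (h : 1 ≤ δ * (n * θ)) : (1 - θ) ^ n ≤ δ :=
  calc (1 - θ) ^ n ≤ Real.exp (-θ) ^ n :=
        pow_le_pow_left₀ (by linarith) (Real.one_sub_le_exp_neg θ) n
    _ = (Real.exp (n * θ))⁻¹ := by rw [← Real.exp_nat_mul, ← Real.exp_neg]; ring_nf
    _ ≤ δ := by
        rw [inv_le_comm₀ (Real.exp_pos _) hδ, ← one_div, div_le_iff₀ hδ]
        nlinarith [Real.add_one_le_exp (n * θ)]

section Tagged

variable {X Z : Type*} (c : Z → X → ℝ) (Zs : Set Z) (tag : Z → X) (d : X → ℝ)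

open Classical in
noncomputable def tagLearner : (n : ℕ) → (Fin n → X) → X → ℝ := fun _ S =>
  if h : ∃ z ∈ Zs, ∃ i, S i = tag z then c h.choose else d

variable {c Zs tag d}

theorem isLearner_tagLearner (hd : IsPMF d) (hc : ∀ z ∈ Zs, IsPMF (c z)) :
    IsLearner (tagLearner c Zs tag d) := by
  intro n S
  unfold tagLearner
  split_ifs with h
  · exact hc _ h.choose_spec.1
  · exact hd

theorem tagLearner_of_mem {z : Z} (hz : z ∈ Zs)
    (htag : ∀ z' ∈ Zs, c z (tag z') ≠ 0 → z' = z) {n : ℕ} {S : Fin n → X}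
    (hS : ∀ i, c z (S i) ≠ 0) {i : Fin n} (hi : S i = tag z) :
    tagLearner c Zs tag d n S = c z := by
  have h : ∃ z ∈ Zs, ∃ i, S i = tag z := ⟨z, hz, i, hi⟩
  obtain ⟨hz', j, hj⟩ := h.choose_spec
  rw [tagLearner, dif_pos h, htag _ hz' (hj ▸ hS j)]

theorem tagLearner_of_forall_ne {z : Z} (htag : ∀ z' ∈ Zs, c z (tag z') ≠ 0 → z' = z)
    {n : ℕ} {S : Fin n → X} (hS : ∀ i, c z (S i) ≠ 0) (hmiss : ∀ i, S i ≠ tag z) :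
    tagLearner c Zs tag d n S = d := by
  refine dif_neg ?_
  rintro ⟨z', hz', i, hi⟩
  exact hmiss i (hi.trans (congrArg tag (htag z' hz' (hi ▸ hS i))))

theorem realizablyLearnable_of_tag {κ : ℝ} (hκ : 0 < κ) (hd : IsPMF d)
    (hc : ∀ z ∈ Zs, IsPMF (c z)) (hfin : ∀ z ∈ Zs, ∃ s : Finset X, ∀ x ∉ s, c z x = 0)
    (htag : ∀ z ∈ Zs, ∀ z' ∈ Zs, c z (tag z') ≠ 0 → z' = z)
    (hmass : ∀ z ∈ Zs, κ * dTV d (c z) ≤ c z (tag z)) :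
    RealizablyLearnable (c '' Zs) := by
  refine ⟨tagLearner c Zs tag d, isLearner_tagLearner hd hc,
    fun ε δ => ⌈1 / (κ * ε * δ)⌉₊, ?_⟩
  rintro _ ⟨z, hz, rfl⟩ ε ⟨hε, -⟩ δ ⟨hδ, -⟩ n hn
  obtain ⟨s, hs⟩ := hfin z hz
  set E := {S : Fin n → X | dTV (tagLearner c Zs tag d n S) (c z) ≤ ε}
  suffices iidProb (c z) n Eᶜ ≤ δ by
    linarith [iidProb_add_iidProb_compl (hc z hz) hs n E]
  have hfail : ∀ S, (∀ i, c z (S i) ≠ 0) → S ∈ Eᶜ →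
      (∀ i, S i ≠ tag z) ∧ ε < dTV d (c z) := by
    intro S hS hSE
    have hmiss : ∀ i, S i ≠ tag z := by
      intro i hi
      apply hSE
      simp [E, tagLearner_of_mem hz (htag z hz) hS hi, dTV, hε.le]
    refine ⟨hmiss, not_le.mp ?_⟩
    rwa [← tagLearner_of_forall_ne (d := d) (htag z hz) hS hmiss]
  by_cases hclose : dTV d (c z) ≤ ε
  · calc iidProb (c z) n Eᶜ ≤ iidProb (c z) n ∅ :=
          iidProb_mono (hc z hz).1 hs fun S hS hSE => ((hfail S hS hSE).2.not_ge hclose).elim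
      _ ≤ δ := by simp [iidProb, hδ.le]
  · have hn' : 1 / (κ * ε * δ) ≤ n := (Nat.le_ceil _).trans (Nat.cast_le.mpr hn)
    calc iidProb (c z) n Eᶜ ≤ iidProb (c z) n {S | ∀ i, S i ≠ tag z} :=
          iidProb_mono (hc z hz).1 hs fun S hS hSE => (hfail S hS hSE).1
      _ = (1 - c z (tag z)) ^ n := iidProb_forall_ne (hc z hz) hs n (tag z)
      _ ≤ δ := by
          refine one_sub_pow_le n ((hc z hz).le_one _) hδ ?_
          rw [div_le_iff₀ (by positivity)] at hn'
          have hθ : κ * ε < c z (tag z) :=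
            (mul_lt_mul_of_pos_left (not_le.mp hclose) hκ).trans_le (hmass z hz)
          nlinarith [mul_le_mul_of_nonneg_left hθ.le (by positivity : (0 : ℝ) ≤ δ * n)]

end Tagged

theorem choose_sub_one_mul_le (a : ℕ) {b : ℕ} (hb : 0 < b) :
    (a - 1).choose (b - 1) * a ≤ a.choose b * b := by
  obtain ⟨l, rfl⟩ : ∃ l, b = l + 1 := ⟨b - 1, by omega⟩
  rcases a with _ | k
  · simp
  · rw [mul_comm]
    exact (Nat.add_one_mul_choose_eq k l).le

-- Markov's inequality for `#((G \ V) ∩ B)`, whose mean over the `m`-subsets `B ⊇ V` of `W` is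
-- at most `#G * (m - #V) / (#W - #V)`.
theorem card_filter_inter_mul_le {α : Type*} [DecidableEq α] {W V G : Finset α} {m : ℕ}
    (hVW : V ⊆ W) (hVm : #V < m) (t : ℕ) :
    t * #{B ∈ W.powersetCard m | V ⊆ B ∧ t + #V ≤ #(B ∩ G)} * (#W - #V) ≤
      #G * #{B ∈ W.powersetCard m | V ⊆ B} * (m - #V) := by
  set T := {B ∈ W.powersetCard m | V ⊆ B}
  set c₁ := (#W - #V - 1).choose (m - #V - 1)
  have hcount : ∀ a ∈ G \ V, #{B ∈ T | a ∈ B} ≤ c₁ := by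
    intro a ha
    by_cases haW : a ∈ W
    · have hfilter : {B ∈ T | a ∈ B} = {B ∈ W.powersetCard m | insert a V ⊆ B} := by
        simp only [T, Finset.filter_filter, Finset.insert_subset_iff, and_comm]
      have haV : a ∉ V := (Finset.mem_sdiff.mp ha).2
      rw [hfilter, Finset.card_filter_powersetCard_subset _ _ _ (Finset.insert_subset haW hVW)
        (by rw [Finset.card_insert_of_notMem haV]; omega), Finset.card_insert_of_notMem haV]
      simp only [c₁, Nat.sub_sub, le_refl]
    · have : {B ∈ T | a ∈ B} = ∅ := Finset.filter_false_of_mem fun B hB haB =>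
        haW ((Finset.mem_powersetCard.mp (Finset.mem_filter.mp hB).1).1 haB)
      simp [this]
  have hsum : t * #{B ∈ W.powersetCard m | V ⊆ B ∧ t + #V ≤ #(B ∩ G)} ≤ #G * c₁ :=
    calc t * #{B ∈ W.powersetCard m | V ⊆ B ∧ t + #V ≤ #(B ∩ G)}
        = ∑ _B ∈ {B ∈ W.powersetCard m | V ⊆ B ∧ t + #V ≤ #(B ∩ G)}, t := by
          rw [Finset.sum_const, smul_eq_mul, mul_comm]
      _ ≤ ∑ B ∈ {B ∈ W.powersetCard m | V ⊆ B ∧ t + #V ≤ #(B ∩ G)}, #((G \ V) ∩ B) := by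
          refine Finset.sum_le_sum fun B hB => ?_
          have hBG : B ∩ G ⊆ (G \ V) ∩ B ∪ V := fun x hx => by
            by_cases hxV : x ∈ V <;> simp_all
          have := (Finset.card_le_card hBG).trans (Finset.card_union_le _ _)
          have := (Finset.mem_filter.mp hB).2.2
          omega
      _ ≤ ∑ B ∈ T, #((G \ V) ∩ B) :=
          Finset.sum_le_sum_of_subset fun B hB => by
            simp only [T, Finset.mem_filter] at hB ⊢
            exact ⟨hB.1, hB.2.1⟩
      _ ≤ #(G \ V) * c₁ := Finset.sum_card_inter_le hcount
      _ ≤ #G * c₁ := Nat.mul_le_mul_right _ (Finset.card_le_card Finset.sdiff_subset)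
  have hpascal : c₁ * (#W - #V) ≤ #T * (m - #V) := by
    rw [Finset.card_filter_powersetCard_subset _ _ _ hVW hVm.le]
    exact choose_sub_one_mul_le _ (by omega)
  calc t * #{B ∈ W.powersetCard m | V ⊆ B ∧ t + #V ≤ #(B ∩ G)} * (#W - #V)
      ≤ #G * c₁ * (#W - #V) := Nat.mul_le_mul_right _ hsum
    _ = #G * (c₁ * (#W - #V)) := mul_assoc _ _ _
    _ ≤ #G * (#T * (m - #V)) := Nat.mul_le_mul_left _ hpascal
    _ = #G * #T * (m - #V) := (mul_assoc _ _ _).symm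

theorem three_mul_card_filter_le {α : Type*} [DecidableEq α] {W V G : Finset α} {m t : ℕ}
    {γ : ℝ} (hVW : V ⊆ W) (hVm : #V < m) (ht : 0 < t) (hγ : 0 < γ) (hG : γ * #G ≤ 8 * m)
    (hW : 24 * (m : ℝ) ^ 2 ≤ γ * (#W - #V)) :
    3 * #{B ∈ W.powersetCard m | V ⊆ B ∧ t + #V ≤ #(B ∩ G)} ≤
      #{B ∈ W.powersetCard m | V ⊆ B} := by
  set bad := #{B ∈ W.powersetCard m | V ⊆ B ∧ t + #V ≤ #(B ∩ G)}
  set T := #{B ∈ W.powersetCard m | V ⊆ B}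
  have hcount : (t : ℝ) * bad * (#W - #V) ≤ #G * T * (m - #V) := by
    have h := card_filter_inter_mul_le (G := G) hVW hVm t
    rw [← Nat.cast_le (α := ℝ)] at h
    push_cast [Nat.cast_sub (Finset.card_le_card hVW), Nat.cast_sub hVm.le] at h
    exact h
  have hmV : (0 : ℝ) ≤ m - #V := sub_nonneg.mpr (by exact_mod_cast hVm.le)
  have hm : (0 : ℝ) < m := by exact_mod_cast (by omega : 0 < m)
  have hpos : 0 < γ * (#W - #V) := lt_of_lt_of_le (by positivity) hW
  have hkey : γ * (#W - #V) * (3 * (t * bad)) ≤ γ * (#W - #V) * T :=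
    calc γ * (#W - #V) * (3 * (t * bad))
        = 3 * (γ * (t * bad * (#W - #V))) := by ring
      _ ≤ 3 * (γ * (#G * T * (m - #V))) := by gcongr
      _ = 3 * ((γ * #G) * (T * (m - #V))) := by ring
      _ ≤ 3 * (8 * m * (T * m)) := by gcongr; linarith
      _ = 24 * m ^ 2 * T := by ring
      _ ≤ γ * (#W - #V) * T := by gcongr
  have h := le_of_mul_le_mul_left hkey hpos
  have ht' : (1 : ℝ) ≤ t := by exact_mod_cast ht
  exact_mod_cast (show (3 * bad : ℝ) ≤ T by nlinarith)

section HardFamily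

variable {X : Type*} [DecidableEq X]

theorem mix_unif_dirac_of_mem {x₀ x : X} {B : Finset X} (hx : x ∈ B) (hx₀ : x ≠ x₀) (γ : ℝ) :
    mix γ (unif B) (dirac x₀) x = γ / #B := by
  simp [mix, unif, dirac, hx, hx₀, div_eq_mul_inv]

theorem mix_unif_dirac_self {x₀ : X} {B : Finset X} (hx₀ : x₀ ∉ B) (γ : ℝ) :
    mix γ (unif B) (dirac x₀) x₀ = 1 - γ := by
  simp [mix, unif, dirac, hx₀]

theorem card_le_two_mul_card_heavy {f : X → ℝ} (hf : IsPMF f) {x₀ : X} {B : Finset X}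
    (hB : B.Nonempty) (hx₀ : x₀ ∉ B) {γ r : ℝ} (hγ₀ : 0 < γ) (hγ₁ : γ ≤ 1)
    (hr : 32 * r ≤ 7 * γ) (hfit : dTV f (mix γ (unif B) (dirac x₀)) ≤ r) :
    #B ≤ 2 * #{x ∈ B | γ / (8 * #B) ≤ f x} := by
  set p := mix γ (unif B) (dirac x₀)
  set L := {x ∈ B | ¬ γ / (8 * #B) ≤ f x}
  have hBpos : (0 : ℝ) < #B := by exact_mod_cast hB.card_pos
  have hgap : ∀ x ∈ L, 7 * γ / (8 * #B) ≤ |f x - p x| := by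
    intro x hx
    obtain ⟨hxB, hfx⟩ := Finset.mem_filter.mp hx
    have hpx : p x = γ / #B := mix_unif_dirac_of_mem hxB (ne_of_mem_of_not_mem hxB hx₀) γ
    have : 7 * γ / (8 * #B) = γ / #B - γ / (8 * #B) := by field_simp; ring
    rw [hpx, abs_sub_comm, this]
    exact (sub_le_sub_left (not_le.mp hfx).le _).trans (le_abs_self _)
  have hLsum : #L * (7 * γ / (8 * #B)) ≤ 2 * r :=
    calc #L * (7 * γ / (8 * #B)) = ∑ _x ∈ L, 7 * γ / (8 * #B) := by
          rw [Finset.sum_const, nsmul_eq_mul]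
      _ ≤ ∑ x ∈ L, |f x - p x| := Finset.sum_le_sum hgap
      _ ≤ 2 * dTV f p := sum_abs_sub_le_two_mul_dTV hf.summable
          (isPMF_mix (isPMF_unif hB) (isPMF_dirac x₀) hγ₀.le hγ₁).summable L
      _ ≤ 2 * r := by linarith
  have hL : (#L : ℝ) * 2 ≤ #B := by
    rw [mul_div_assoc', div_le_iff₀ (by positivity)] at hLsum
    nlinarith
  have hsplit : #{x ∈ B | γ / (8 * #B) ≤ f x} + #L = #B :=
    Finset.card_filter_add_card_filter_not _
  have : #L * 2 ≤ #B := by exact_mod_cast hL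
  omega

theorem prod_mix_unif_dirac {x₀ : X} {B : Finset X} (hx₀ : x₀ ∉ B) (γ : ℝ) {n : ℕ}
    (S : Fin n → X) :
    ∏ i, mix γ (unif B) (dirac x₀) (S i) =
      if (Finset.univ.image S).erase x₀ ⊆ B then ∏ i, (if S i = x₀ then 1 - γ else γ / #B)
      else 0 := by
  split_ifs with hV
  · refine Finset.prod_congr rfl fun i _ => ?_
    split_ifs with hi
    · rw [hi, mix_unif_dirac_self hx₀]
    · exact mix_unif_dirac_of_mem (hV (by simp [hi])) hi γ
  · obtain ⟨x, hxV, hxB⟩ := Finset.not_subset.mp hV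
    obtain ⟨hx, i, -, rfl⟩ : x ≠ x₀ ∧ ∃ i, i ∈ Finset.univ ∧ S i = x := by simpa using hxV
    exact Finset.prod_eq_zero (Finset.mem_univ i) (by simp [mix, unif, dirac, hxB, hx])

theorem sum_filter_dTV_le_prod_le_third {f : X → ℝ} (hf : IsPMF f) {x₀ : X} {W : Finset X}
    (hx₀ : x₀ ∉ W) {n m : ℕ} (hm : 4 * n + 4 ≤ m) {γ r : ℝ} (hγ₀ : 0 < γ) (hγ₁ : γ ≤ 1)
    (hr : 32 * r ≤ 7 * γ) (hW : 24 * m ^ 2 ≤ γ * (#W - n)) {S : Fin n → X}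
    (hS : ∀ i, S i ∈ insert x₀ W) :
    ∑ B ∈ W.powersetCard m with dTV f (mix γ (unif B) (dirac x₀)) ≤ r,
        ∏ i, mix γ (unif B) (dirac x₀) (S i) ≤
      1 / 3 * ∑ B ∈ W.powersetCard m, ∏ i, mix γ (unif B) (dirac x₀) (S i) := by
  set V := (Finset.univ.image S).erase x₀
  set G := {x ∈ W | γ / (8 * m) ≤ f x}
  set w := ∏ i, (if S i = x₀ then 1 - γ else γ / m)
  set T := {B ∈ W.powersetCard m | V ⊆ B}
  set bad := {B ∈ W.powersetCard m | V ⊆ B ∧ n + 2 + #V ≤ #(B ∩ G)}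
  have hVW : V ⊆ W := by
    intro x hx
    obtain ⟨hx, i, rfl⟩ : x ≠ x₀ ∧ ∃ i, S i = x := by simpa [V] using hx
    simpa [hx] using hS i
  have hVn : #V ≤ n := Finset.card_erase_le.trans (Finset.card_image_le.trans (by simp))
  have hw : 0 ≤ w := Finset.prod_nonneg fun i _ => by
    split_ifs
    · linarith
    · positivity
  have hmem : ∀ B ∈ W.powersetCard m, B ⊆ W ∧ #B = m := fun B hB =>
    Finset.mem_powersetCard.mp hB
  have hprod : ∀ B ∈ W.powersetCard m,
      ∏ i, mix γ (unif B) (dirac x₀) (S i) = if V ⊆ B then w else 0 := by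
    intro B hB
    rw [prod_mix_unif_dirac (fun h => hx₀ ((hmem B hB).1 h)), (hmem B hB).2]
  have hbad : ∀ B ∈ W.powersetCard m, dTV f (mix γ (unif B) (dirac x₀)) ≤ r →
      n + 2 + #V ≤ #(B ∩ G) := by
    intro B hB hfit
    obtain ⟨hBW, hBm⟩ := hmem B hB
    have hheavy := card_le_two_mul_card_heavy hf (Finset.card_pos.mp (by omega))
      (fun h => hx₀ (hBW h)) hγ₀ hγ₁ hr hfit
    have hsub : {x ∈ B | γ / (8 * #B) ≤ f x} ⊆ B ∩ G := fun x hx => by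
      simp only [Finset.mem_filter, Finset.mem_inter, G, hBm] at hx ⊢
      exact ⟨hx.1, hBW hx.1, hx.2⟩
    have := Finset.card_le_card hsub
    omega
  -- Given the sample, every `B ⊇ V` is equally likely, and a fit forces `B` to meet the heavy
  -- set `G` of `f` in half its points, which happens for at most a third of them.
  have hthird : 3 * (#bad : ℝ) ≤ #T := by
    have hG := hf.mul_card_filter_le_le_one (γ / (8 * m)) W
    have hm : (0 : ℝ) < m := by exact_mod_cast (by omega : 0 < m)
    rw [div_mul_eq_mul_div, div_le_one (by positivity)] at hG
    have hVn' : (#V : ℝ) ≤ n := by exact_mod_cast hVn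
    exact_mod_cast three_mul_card_filter_le hVW (by omega) (by omega) hγ₀ hG
      (hW.trans (by nlinarith))
  calc ∑ B ∈ W.powersetCard m with dTV f (mix γ (unif B) (dirac x₀)) ≤ r,
          ∏ i, mix γ (unif B) (dirac x₀) (S i)
      = ∑ B ∈ W.powersetCard m, if dTV f (mix γ (unif B) (dirac x₀)) ≤ r then
          ∏ i, mix γ (unif B) (dirac x₀) (S i) else 0 := Finset.sum_filter _ _
    _ ≤ ∑ B ∈ W.powersetCard m, if V ⊆ B ∧ n + 2 + #V ≤ #(B ∩ G) then w else 0 := by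
        refine Finset.sum_le_sum fun B hB => ?_
        rw [hprod B hB]
        by_cases hfit : dTV f (mix γ (unif B) (dirac x₀)) ≤ r
        · by_cases hVB : V ⊆ B <;> simp [hfit, hVB, hbad B hB hfit]
        · rw [if_neg hfit]
          split_ifs
          · exact hw
          · exact le_rfl
    _ = #bad * w := by rw [← Finset.sum_filter, Finset.sum_const, nsmul_eq_mul]
    _ ≤ 1 / 3 * (#T * w) := by nlinarith
    _ = 1 / 3 * ∑ B ∈ W.powersetCard m, ∏ i, mix γ (unif B) (dirac x₀) (S i) := by
        rw [Finset.sum_congr rfl hprod, ← Finset.sum_filter, Finset.sum_const, nsmul_eq_mul]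

theorem exists_mix_unif_dirac_iidProb_le_third {x₀ : X} {U : Set X} (hU : U.Infinite)
    (hx₀ : x₀ ∉ U) {A : (n : ℕ) → (Fin n → X) → X → ℝ} (hA : IsLearner A) (n : ℕ) {γ r : ℝ}
    (hγ₀ : 0 < γ) (hγ₁ : γ ≤ 1) (hr : 32 * r ≤ 7 * γ) :
    ∃ B : Finset X, B.Nonempty ∧ ↑B ⊆ U ∧
      iidProb (mix γ (unif B) (dirac x₀)) n
        {S | dTV (A n S) (mix γ (unif B) (dirac x₀)) ≤ r} ≤ 1 / 3 := by
  set m := 4 * n + 4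
  obtain ⟨W, hWU, hWcard⟩ := hU.exists_subset_card_eq (m + n + ⌈24 * m ^ 2 / γ⌉₊)
  have hx₀W : x₀ ∉ W := fun h => hx₀ (hWU h)
  have hW : 24 * (m : ℝ) ^ 2 ≤ γ * (#W - n) := by
    have := Nat.le_ceil (24 * (m : ℝ) ^ 2 / γ)
    rw [div_le_iff₀ hγ₀] at this
    rw [hWcard]
    push_cast
    nlinarith
  set F := W.powersetCard m
  have hmemF : ∀ B ∈ F, B ⊆ W ∧ B.Nonempty := fun B hB => by
    obtain ⟨hBW, hBm⟩ := Finset.mem_powersetCard.mp hB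
    exact ⟨hBW, Finset.card_pos.mp (by omega)⟩
  have hsupp : ∀ B ∈ F, ∀ x ∉ insert x₀ W, mix γ (unif B) (dirac x₀) x = 0 := by
    intro B hB x hx
    have hxB : x ∉ B := fun h => hx (Finset.mem_insert_of_mem ((hmemF B hB).1 h))
    simp_all [mix, unif, dirac]
  have hsum : ∑ B ∈ F, iidProb (mix γ (unif B) (dirac x₀)) n
      {S | dTV (A n S) (mix γ (unif B) (dirac x₀)) ≤ r} ≤ ∑ _B ∈ F, (1 / 3 : ℝ) :=
    calc ∑ B ∈ F, iidProb (mix γ (unif B) (dirac x₀)) n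
          {S | dTV (A n S) (mix γ (unif B) (dirac x₀)) ≤ r}
        = ∑ S ∈ Fintype.piFinset (fun _ => insert x₀ W),
            ∑ B ∈ F with dTV (A n S) (mix γ (unif B) (dirac x₀)) ≤ r,
              ∏ i, mix γ (unif B) (dirac x₀) (S i) := by
          rw [Finset.sum_congr rfl fun B hB => iidProb_eq_sum (hsupp B hB) n _, Finset.sum_comm]
          simp only [Set.indicator_apply, Set.mem_ofPred_eq, Finset.sum_filter]
      _ ≤ ∑ S ∈ Fintype.piFinset (fun _ => insert x₀ W),
            1 / 3 * ∑ B ∈ F, ∏ i, mix γ (unif B) (dirac x₀) (S i) :=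
          Finset.sum_le_sum fun S hS => sum_filter_dTV_le_prod_le_third (hA n S) hx₀W le_rfl hγ₀
            hγ₁ hr hW (Fintype.mem_piFinset.mp hS)
      _ = ∑ _B ∈ F, (1 / 3 : ℝ) := by
          rw [← Finset.mul_sum, Finset.sum_comm, Finset.mul_sum]
          refine Finset.sum_congr rfl fun B hB => ?_
          rw [sum_piFinset_prod, ((isPMF_mix (isPMF_unif (hmemF B hB).2) (isPMF_dirac x₀)
            hγ₀.le hγ₁)).sum_eq_one (hsupp B hB), one_pow, mul_one]
  obtain ⟨B, hB, hle⟩ := Finset.exists_le_of_sum_le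
    (Finset.powersetCard_nonempty.mpr (by omega)) hsum
  exact ⟨B, (hmemF B hB).2, (Finset.coe_subset.mpr (hmemF B hB).1).trans hWU, hle⟩

end HardFamily

section TaggedClass

-- `γ` is rational so that `(B, γ)` can be encoded in the tag point.
def tagParams : Set (Finset (ℕ × ℕ) × ℚ) :=
  {z | z.1.Nonempty ∧ (∀ x ∈ z.1, x.2 = 1) ∧ 0 < z.2 ∧ z.2 ≤ 1}

def tagPoint (z : Finset (ℕ × ℕ) × ℚ) : ℕ × ℕ := (Encodable.encode z, 2)

noncomputable def tagged (κ : ℝ) (z : Finset (ℕ × ℕ) × ℚ) : ℕ × ℕ → ℝ :=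
  mix (κ * z.2) (dirac (tagPoint z)) (mix z.2 (unif z.1) (dirac (0, 0)))

theorem isPMF_tagged {κ : ℝ} (hκ₀ : 0 ≤ κ) (hκ₁ : κ ≤ 1) {z : Finset (ℕ × ℕ) × ℚ}
    (hz : z ∈ tagParams) : IsPMF (tagged κ z) := by
  obtain ⟨hB, -, hγ₀, hγ₁⟩ := hz
  have hγ₀' : (0 : ℝ) ≤ z.2 := by exact_mod_cast hγ₀.le
  have hγ₁' : (z.2 : ℝ) ≤ 1 := by exact_mod_cast hγ₁
  exact isPMF_mix (isPMF_dirac _) (isPMF_mix (isPMF_unif hB) (isPMF_dirac _) hγ₀' hγ₁')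
    (mul_nonneg hκ₀ hγ₀') (by nlinarith)

theorem tagged_apply_tagPoint (κ : ℝ) {z : Finset (ℕ × ℕ) × ℚ} (hz : z ∈ tagParams)
    (z' : Finset (ℕ × ℕ) × ℚ) :
    tagged κ z (tagPoint z') = if z' = z then κ * z.2 else 0 := by
  have hrow : (Encodable.encode z', 2) ∉ z.1 := fun h => by simpa using hz.2.1 _ h
  simp [tagged, mix, unif, dirac, hrow, tagPoint]

theorem tagged_apply_zero (κ : ℝ) {z : Finset (ℕ × ℕ) × ℚ} (hz : z ∈ tagParams) :
    tagged κ z (0, 0) = (1 - κ * z.2) * (1 - z.2) := by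
  have hrow : ((0, 0) : ℕ × ℕ) ∉ z.1 := fun h => by simpa using hz.2.1 _ h
  simp [tagged, mix, unif, dirac, hrow, tagPoint]

theorem tagged_eq_zero {κ : ℝ} {z : Finset (ℕ × ℕ) × ℚ} {x : ℕ × ℕ}
    (hx : x ∉ insert (tagPoint z) (insert (0, 0) z.1)) : tagged κ z x = 0 := by
  simp only [Finset.mem_insert, not_or] at hx
  simp [tagged, mix, unif, dirac, hx.1, hx.2.1, hx.2.2]

theorem realizablyLearnable_tagged {κ : ℝ} (hκ₀ : 0 < κ) (hκ₁ : κ ≤ 1) :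
    RealizablyLearnable (tagged κ '' tagParams) := by
  refine realizablyLearnable_of_tag (tag := tagPoint) (d := dirac (0, 0)) (κ := κ / 2)
    (by positivity) (isPMF_dirac _) (fun z hz => isPMF_tagged hκ₀.le hκ₁ hz)
    (fun z _ => ⟨_, fun x hx => tagged_eq_zero hx⟩) (fun z hz z' _ h => ?_) fun z hz => ?_
  · rw [tagged_apply_tagPoint κ hz] at h
    exact of_not_not fun hne => h (if_neg hne)
  · have hγ : (0 : ℝ) < z.2 := by exact_mod_cast hz.2.2.1
    rw [dTV_dirac (isPMF_tagged hκ₀.le hκ₁ hz), tagged_apply_zero κ hz,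
      tagged_apply_tagPoint κ hz, if_pos rfl]
    nlinarith [mul_pos hκ₀ hγ]

theorem not_etaSubtractiveRobustlyLearnable_tagged {κ α η : ℝ} (hκ₀ : 0 < κ) (hα : 0 < α)
    (hη : 0 < η) (hκα : 8 * α * κ ≤ 1) (hαη : 16 * α * η ≤ 1) :
    ¬ EtaSubtractiveRobustlyLearnable (tagged κ '' tagParams) η α := by
  rintro ⟨A, hA, nC, H⟩
  obtain ⟨γ, hγ₇, hγ₈⟩ := exists_rat_btwn (by nlinarith [mul_pos hα hη] :
    7 * (α * η) < 8 * (α * η))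
  have hγ₀ : (0 : ℝ) < γ := by nlinarith [mul_pos hα hη]
  have hγ₁ : (γ : ℝ) ≤ 1 := by linarith
  have hrow : {x : ℕ × ℕ | x.2 = 1}.Infinite :=
    Set.infinite_of_injective_forall_mem (f := fun k : ℕ => (k, 1))
      (fun a b h => (Prod.ext_iff.mp h).1) fun _ => rfl
  obtain ⟨B, hB, hBrow, hfail⟩ :=
    exists_mix_unif_dirac_iidProb_le_third hrow (x₀ := (0, 0)) (by simp) hA
      (nC (α * η / 2) (1 / 2)) hγ₀ hγ₁ (r := α * η + α * η / 2) (by linarith)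
  have hz : (B, γ) ∈ tagParams := ⟨hB, fun x hx => hBrow hx, by exact_mod_cast hγ₀,
    by exact_mod_cast hγ₁⟩
  have hp := isPMF_mix (isPMF_unif hB) (isPMF_dirac ((0, 0) : ℕ × ℕ)) hγ₀.le hγ₁
  have hκγ : κ * γ / η ≤ 1 := by
    rw [div_le_one hη]
    nlinarith [mul_le_mul_of_nonneg_left hγ₈.le hκ₀.le]
  have hsucc := H _ hp ⟨_, isPMF_mix (isPMF_dirac (tagPoint (B, γ))) hp
      (by positivity) hκγ, (B, γ), hz, (mix_mix_div_self _ _ hη.ne' _).symm⟩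
    (α * η / 2) ⟨by positivity, by linarith⟩ (1 / 2) ⟨by norm_num, by norm_num⟩ _ le_rfl
  linarith

end TaggedClass

/-- for every `α > 0` there is a class over `ℕ × ℕ` that is
realizably learnable but not `η`-subtractive `α`-robustly learnable for any
`0 < η ≤ 1/(16α)`. -/
theorem exists_realizable_not_eta_subtractive (α : ℝ) (hα : 0 < α) :
    ∃ C : Set (ℕ × ℕ → ℝ), (∀ p ∈ C, IsPMF p) ∧ RealizablyLearnable C ∧
      ∀ η : ℝ, 0 < η → η ≤ 1 / (16 * α) →
        ¬ EtaSubtractiveRobustlyLearnable C η α := by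
  set κ := 1 / (8 * α + 1)
  have hκ₀ : 0 < κ := by positivity
  have hκ₁ : κ ≤ 1 := by rw [div_le_one (by positivity)]; linarith
  have hκα : 8 * α * κ ≤ 1 := by
    rw [← mul_div_assoc, mul_one, div_le_one (by positivity)]; linarith
  refine ⟨tagged κ '' tagParams, ?_, realizablyLearnable_tagged hκ₀ hκ₁, fun η hη hηα => ?_⟩
  · rintro _ ⟨z, hz, rfl⟩
    exact isPMF_tagged hκ₀.le hκ₁ hz
  · rw [le_div_iff₀ (by positivity)] at hηα
    exact not_etaSubtractiveRobustlyLearnable_tagged hκ₀ hα hη hκα (by linarith)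

end RobustDistLearn
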